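/- Let G be an abelian group with subgroups S⁰ ⊆ S⁺ ∩ S⁻, M⁰, M⁺, M⁻, E such that M* = S* ∩ E for * ∈ {0,+,−}, S⁰ = S⁺ ∩ S⁻, and S⁺ + S⁻ = S with E ⊆ S. Setting κ* = S*/M* and Ш = S/E, if additionally M⁺ + M⁻ = E, then there is a short exact sequence 0 → κ⁰ → κ⁺ × κ⁻ → Ш → 0, where the first map is induced by the diagonal inclusion and the second by (s⁺ mod E, s⁻ mod E) ↦ s⁺ − s⁻ mod E (up to sign conventions). -/

import Mathlib

/-!
Write `κ H = H / (H ∩ E)`. The map `κ⁰ → κ⁺ × κ⁻` is injective because `κ⁰ → κ⁺` already is,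
as `S⁰ ∩ E = S⁰ ∩ (S⁺ ∩ E)`. The difference map onto `Ш = S / E` is surjective because
`S = S⁺ + S⁻`. For exactness in the middle, suppose `y ∈ S⁺`, `z ∈ S⁻` and `y - z ∈ E = M⁺ + M⁻`.
Write `y - z = a + b` with `a ∈ M⁺` and `b ∈ M⁻`. Then `x = y - a = z + b` lies in
`S⁺ ∩ S⁻ = S⁰` and maps to `(y, z)`.
-/

namespace AddSubgroup

variable {G : Type*} [AddCommGroup G] {A B C S : AddSubgroup G}

theorem injective_quotientMapAddSubgroupOfOfLe_inf (E : AddSubgroup G) (h : C ≤ A) :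
    Function.Injective
      (QuotientAddGroup.quotientMapAddSubgroupOfOfLe (inf_le_inf_right E h) h) := by
  rw [injective_iff_map_eq_zero]
  intro x
  induction x using QuotientAddGroup.induction_on with
  | H c =>
    simp only [QuotientAddGroup.quotientMapAddSubgroupOfOfLe_mk, QuotientAddGroup.eq_zero_iff,
      mem_addSubgroupOf, coe_inclusion, mem_inf]
    exact fun hc => ⟨c.2, hc.2⟩

theorem exists_mem_inf_neg_add_mem_inf_of_sub_mem_sup {E : AddSubgroup G} {y z : G} (hy : y ∈ A)
    (hz : z ∈ B) (hyz : y - z ∈ (A ⊓ E) ⊔ (B ⊓ E)) :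
    ∃ x ∈ A ⊓ B, -x + y ∈ A ⊓ E ∧ -x + z ∈ B ⊓ E := by
  obtain ⟨a, ha, b, hb, hab⟩ := mem_sup.mp hyz
  have hya : y - a = z + b := by rw [← sub_add_cancel y z, ← hab]; abel
  refine ⟨y - a, ⟨A.sub_mem hy ha.1, hya ▸ B.add_mem hz hb.1⟩, ?_, ?_⟩
  · simpa using ha
  · rw [hya]; simpa using (B ⊓ E).neg_mem hb

variable (E : AddSubgroup G)

def diagonalMap (hA : C ≤ A) (hB : C ≤ B) :
    C ⧸ (C ⊓ E).addSubgroupOf C →+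
      (A ⧸ (A ⊓ E).addSubgroupOf A) × (B ⧸ (B ⊓ E).addSubgroupOf B) :=
  (QuotientAddGroup.quotientMapAddSubgroupOfOfLe (inf_le_inf_right E hA) hA).prod
    (QuotientAddGroup.quotientMapAddSubgroupOfOfLe (inf_le_inf_right E hB) hB)

def differenceMap (hA : A ≤ S) (hB : B ≤ S) :
    (A ⧸ (A ⊓ E).addSubgroupOf A) × (B ⧸ (B ⊓ E).addSubgroupOf B) →+ S ⧸ E.addSubgroupOf S :=
  (QuotientAddGroup.quotientMapAddSubgroupOfOfLe inf_le_right hA).comp (AddMonoidHom.fst _ _) -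
    (QuotientAddGroup.quotientMapAddSubgroupOfOfLe inf_le_right hB).comp (AddMonoidHom.snd _ _)

@[simp]
theorem diagonalMap_mk (hA : C ≤ A) (hB : C ≤ B) (x : C) :
    diagonalMap E hA hB x =
      ((inclusion hA x : A ⧸ (A ⊓ E).addSubgroupOf A),
        (inclusion hB x : B ⧸ (B ⊓ E).addSubgroupOf B)) :=
  rfl

@[simp]
theorem differenceMap_mk (hA : A ≤ S) (hB : B ≤ S) (y : A) (z : B) :
    differenceMap E hA hB (y, z) =
      (inclusion hA y : S ⧸ E.addSubgroupOf S) - (inclusion hB z : S ⧸ E.addSubgroupOf S) :=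
  rfl

theorem diagonalMap_injective (hA : C ≤ A) (hB : C ≤ B) :
    Function.Injective (diagonalMap E hA hB) :=
  fun _ _ h => injective_quotientMapAddSubgroupOfOfLe_inf E hA (congrArg Prod.fst h)

theorem differenceMap_surjective (hA : A ≤ S) (hB : B ≤ S) (hS : A ⊔ B = S) :
    Function.Surjective (differenceMap E hA hB) := by
  intro w
  induction w using QuotientAddGroup.induction_on with
  | H s =>
    obtain ⟨y, hy, z, hz, hyz⟩ := mem_sup.mp (hS ▸ s.2 : (s : G) ∈ A ⊔ B)
    refine ⟨((⟨y, hy⟩ : A), (⟨-z, neg_mem hz⟩ : B)), ?_⟩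
    rw [differenceMap_mk, ← QuotientAddGroup.mk_sub]
    congr 1
    ext
    simp [hyz]

theorem differenceMap_eq_zero_iff (hCA : C ≤ A) (hCB : C ≤ B) (hAS : A ≤ S) (hBS : B ≤ S)
    (hC : C = A ⊓ B) (hE : (A ⊓ E) ⊔ (B ⊓ E) = E) (w) :
    differenceMap E hAS hBS w = 0 ↔ w ∈ Set.range (diagonalMap E hCA hCB) := by
  obtain ⟨y, z⟩ := w
  induction y using QuotientAddGroup.induction_on with
  | H y =>
  induction z using QuotientAddGroup.induction_on with
  | H z =>
  rw [differenceMap_mk, sub_eq_zero, QuotientAddGroup.eq, mem_addSubgroupOf]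
  constructor
  · intro hyz
    obtain ⟨x, hx, hxy, hxz⟩ := exists_mem_inf_neg_add_mem_inf_of_sub_mem_sup y.2 z.2
      (by rw [hE, ← neg_sub]; simpa [neg_add_eq_sub] using E.neg_mem hyz)
    refine ⟨(⟨x, hC ▸ hx⟩ : C), ?_⟩
    simp only [diagonalMap_mk, Prod.mk.injEq, QuotientAddGroup.eq, mem_addSubgroupOf]
    exact ⟨hxy, hxz⟩
  · rintro ⟨v, hv⟩
    induction v using QuotientAddGroup.induction_on with
    | H x =>
    simp only [diagonalMap_mk, Prod.mk.injEq, QuotientAddGroup.eq, mem_addSubgroupOf] at hv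
    convert E.add_mem (E.neg_mem hv.1.2) hv.2.2 using 1
    simp only [coe_add, coe_neg, coe_inclusion]
    abel

end AddSubgroup

theorem stmt_15_general {G : Type*} [AddCommGroup G] (S Sp Sm S0 E : AddSubgroup G)
    (hS0 : S0 = Sp ⊓ Sm) (hS : Sp ⊔ Sm = S)
    (hle1 : S0 ≤ Sp) (hle2 : S0 ≤ Sm) (hle3 : Sp ≤ S) (hle4 : Sm ≤ S)
    (hM : (Sp ⊓ E) ⊔ (Sm ⊓ E) = E) :
    ∃ (f : ↥S0 ⧸ (S0 ⊓ E).addSubgroupOf S0 →+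
          (↥Sp ⧸ (Sp ⊓ E).addSubgroupOf Sp) × (↥Sm ⧸ (Sm ⊓ E).addSubgroupOf Sm))
      (g : (↥Sp ⧸ (Sp ⊓ E).addSubgroupOf Sp) × (↥Sm ⧸ (Sm ⊓ E).addSubgroupOf Sm) →+
          ↥S ⧸ E.addSubgroupOf S),
      (∀ x : ↥S0, f (QuotientAddGroup.mk x) =
        (QuotientAddGroup.mk (AddSubgroup.inclusion hle1 x),
         QuotientAddGroup.mk (AddSubgroup.inclusion hle2 x))) ∧
      (∀ (y : ↥Sp) (z : ↥Sm),
        g (QuotientAddGroup.mk y, QuotientAddGroup.mk z) =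
          QuotientAddGroup.mk (AddSubgroup.inclusion hle3 y) -
          QuotientAddGroup.mk (AddSubgroup.inclusion hle4 z)) ∧
      Function.Injective f ∧ Function.Surjective g ∧
      (∀ w, g w = 0 ↔ w ∈ Set.range f) :=
  ⟨AddSubgroup.diagonalMap E hle1 hle2, AddSubgroup.differenceMap E hle3 hle4,
    AddSubgroup.diagonalMap_mk E hle1 hle2, AddSubgroup.differenceMap_mk E hle3 hle4,
    AddSubgroup.diagonalMap_injective E hle1 hle2,
    AddSubgroup.differenceMap_surjective E hle3 hle4 hS,
    AddSubgroup.differenceMap_eq_zero_iff E hle1 hle2 hle3 hle4 hS0 hM⟩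

theorem stmt_15 {G : Type*} [AddCommGroup G] (S Sp Sm S0 E : AddSubgroup G)
    (hS0 : S0 = Sp ⊓ Sm) (hS : Sp ⊔ Sm = S) (hE : E ≤ S)
    (hle1 : S0 ≤ Sp) (hle2 : S0 ≤ Sm) (hle3 : Sp ≤ S) (hle4 : Sm ≤ S)
    (hM : (Sp ⊓ E) ⊔ (Sm ⊓ E) = E) :
    ∃ (f : ↥S0 ⧸ (S0 ⊓ E).addSubgroupOf S0 →+
          (↥Sp ⧸ (Sp ⊓ E).addSubgroupOf Sp) × (↥Sm ⧸ (Sm ⊓ E).addSubgroupOf Sm))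
      (g : (↥Sp ⧸ (Sp ⊓ E).addSubgroupOf Sp) × (↥Sm ⧸ (Sm ⊓ E).addSubgroupOf Sm) →+
          ↥S ⧸ E.addSubgroupOf S),
      (∀ x : ↥S0, f (QuotientAddGroup.mk x) =
        (QuotientAddGroup.mk (AddSubgroup.inclusion hle1 x),
         QuotientAddGroup.mk (AddSubgroup.inclusion hle2 x))) ∧
      (∀ (y : ↥Sp) (z : ↥Sm),
        g (QuotientAddGroup.mk y, QuotientAddGroup.mk z) =
          QuotientAddGroup.mk (AddSubgroup.inclusion hle3 y) -
          QuotientAddGroup.mk (AddSubgroup.inclusion hle4 z)) ∧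
      Function.Injective f ∧ Function.Surjective g ∧
      (∀ w, g w = 0 ↔ w ∈ Set.range f) :=
  stmt_15_general S Sp Sm S0 E hS0 hS hle1 hle2 hle3 hle4 hM
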